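/- For every w ∈ ℝ, define the mask {a_k}_{k=−9}^{10} with a_k = a_{1−k} by: a_{−9} = w/400, a_{−8} = 9w/400, a_{−7} = −1/16, a_{−6} = −9w/400 − 21/200, a_{−5} = −w/400 − 9/200, a_{−4} = 11/200 − 3w/400, a_{−3} = 39/200 − 27w/400, a_{−2} = 9/16, a_{−1} = 27w/400 + 91/100, a_0 = 3w/400 + 99/100 (and a_k = 0 for k < −9 or k > 10). Then: (i) for every γ ∈ {0, 1, 2, 3, 4}, Σ_{k∈ℤ} a_{5k+γ} = 1; and (ii) the polynomial P_w(z) = Σ_{k=−9}^{10} a_k z^{k+9} ∈ ℝ[z] is divisible by (1 + z + z² + z³ + z⁴)³. -/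
import Mathlib


/-- The one-parameter family of 5-ary dual interpolatory masks of Section 4.3:
supported on `{-9, …, 10}`, symmetric in the sense `a_k = a_{1-k}`, with the
prescribed values for `k = -9, …, 0`. -/
noncomputable def mask5 (w : ℝ) : ℤ → ℝ := fun k =>
  let j : ℤ := if k ≤ 0 then k else 1 - k
  if j = -9 then w / 400
  else if j = -8 then 9 * w / 400
  else if j = -7 then -(1 / 16)
  else if j = -6 then -(9 * w / 400) - 21 / 200
  else if j = -5 then -(w / 400) - 9 / 200
  else if j = -4 then 11 / 200 - 3 * w / 400
  else if j = -3 then 39 / 200 - 27 * w / 400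
  else if j = -2 then 9 / 16
  else if j = -1 then 27 * w / 400 + 91 / 100
  else if j = 0 then 3 * w / 400 + 99 / 100
  else 0


lemma mask5_zero (w : ℝ) (n : ℤ) (h : n < -9 ∨ 10 < n) : mask5 w n = 0 := by
  have hj : (if n ≤ 0 then n else 1 - n) < -9 := by split <;> omega
  simp only [mask5]
  rw [if_neg (by omega), if_neg (by omega), if_neg (by omega), if_neg (by omega),
    if_neg (by omega), if_neg (by omega), if_neg (by omega), if_neg (by omega),
    if_neg (by omega), if_neg (by omega)]

open Polynomial in
/-- every mask of the 5-ary family satisfies (i) each of the five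
sub-mask sums equals `1` (necessary condition for convergence) and (ii) the
polynomial `P_w(z) = Σ_{k=-9}^{10} a_k z^{k+9}` is divisible by `(1+z+z²+z³+z⁴)³`
(reproduction of quadratic polynomials). -/
theorem fiveary_dual_family_properties (w : ℝ) :
    (∀ γ : ℕ, γ < 5 → ∑ᶠ k : ℤ, mask5 w (5 * k + (γ : ℤ)) = 1) ∧
    ((1 + X + X ^ 2 + X ^ 3 + X ^ 4 : ℝ[X]) ^ 3 ∣
      ∑ k ∈ Finset.range 20, C (mask5 w ((k : ℤ) - 9)) * X ^ k) := by
  constructor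
  · intro γ hγ
    have hsub : Function.support (fun k : ℤ => mask5 w (5 * k + (γ : ℤ))) ⊆
        (({-2, -1, 0, 1, 2} : Finset ℤ) : Set ℤ) := by
      intro k hk
      simp only [Function.mem_support] at hk
      by_contra hm
      simp only [Finset.coe_insert, Finset.coe_singleton, Set.mem_insert_iff,
        Set.mem_singleton_iff] at hm
      push_neg at hm
      exact hk (mask5_zero w _ (by omega))
    rw [finsum_eq_finset_sum_of_support_subset _ hsub]
    interval_cases γ <;> norm_num [Finset.sum_insert, mask5] <;> ring
  · refine ⟨C (w / 400) + C (3 * w / 200) * X + C (-(1 / 16) - 3 * w / 50) * X ^ 2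
        + C (33 / 400 + 17 * w / 400) * X ^ 3 + C (33 / 400 + 17 * w / 400) * X ^ 4
        + C (-(1 / 16) - 3 * w / 50) * X ^ 5 + C (3 * w / 200) * X ^ 6
        + C (w / 400) * X ^ 7, ?_⟩
    apply Polynomial.funext
    intro x
    simp only [Finset.sum_range_succ, Finset.sum_range_zero, eval_add, eval_mul, eval_pow,
      eval_C, eval_X, eval_one, eval_zero, zero_add]
    norm_num [mask5]
    ring
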